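/- arXiv:2501.12997 — 5 statements merged into one kernel-verified Lean document; each statement's English description precedes it below -/
import Mathlib

section
/- Let h ≥ 1 be fixed. For all sufficiently large m, the following holds: let B be a finite set of size m and let γ, τ₁, …, τ_h be bijections from {1,…,m} to B such that each τ_s is 'close' to γ, meaning γ⁻¹(τ_s(j)) ≤ j + √m for every j ∈ {1,…,m}. Then there exists r with 1 ≤ r ≤ m/2 + √m such that the element γ(r) has position at most m/2 in every permutation τ₁, …, τ_h, i.e., τ_s⁻¹(γ(r)) ≤ m/2 for all s = 1,…,h. -/
/-!
Let `a = m / 2` and `q = ⌊√m⌋`. Closeness makes `j ↦ γ⁻¹ (τ_s j)` send the first `a` positions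
into the first `a + q`, so for each `s` at most `q` of the first `a + q` elements of `γ` sit
outside the first `a` positions of `τ_s`. A union bound over `s` leaves one of them early in
every `τ_s` as soon as `h * q < a`, which holds once `m ≥ (2h + 2)²`.
-/

open Finset

theorem Finset.exists_mem_forall_mem_of_card_sdiff_le {ι α : Type*} [Fintype ι] [DecidableEq α]
    (T : Finset α) (G : ι → Finset α) {k : ℕ} (hG : ∀ i, #(T \ G i) ≤ k)
    (hT : Fintype.card ι * k < #T) : ∃ r ∈ T, ∀ i, r ∈ G i := by
  by_contra! hcover
  have hsub : T ⊆ univ.biUnion fun i => T \ G i := fun r hr => by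
    obtain ⟨i, hi⟩ := hcover r hr
    exact mem_biUnion.2 ⟨i, mem_univ i, mem_sdiff.2 ⟨hr, hi⟩⟩
  have := (card_le_card hsub).trans (card_biUnion_le_card_mul _ _ k fun i _ => hG i)
  rw [card_univ] at this
  omega

/-- `σ` sends the `a` positions below `a` below `a + d`, leaving room for at most `d` others. -/
theorem Equiv.card_filter_lt_add_sdiff_filter_symm_lt_le {m a d : ℕ} (σ : Fin m ≃ Fin m)
    (hσ : ∀ j, (σ j : ℕ) ≤ j + d) (ha : a ≤ m) :
    #(({r | (r : ℕ) < a + d} : Finset (Fin m)) \ ({r | (σ.symm r : ℕ) < a} : Finset (Fin m)))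
      ≤ d := by
  have hgood : a ≤ #(({r | (σ.symm r : ℕ) < a} : Finset (Fin m)) ∩
      ({r | (r : ℕ) < a + d} : Finset (Fin m))) :=
    calc a = #{j : Fin m | (j : ℕ) < a} := by rw [Fin.card_filter_val_lt]; omega
      _ = #(Finset.image σ {j : Fin m | (j : ℕ) < a}) :=
        (card_image_of_injective _ σ.injective).symm
      _ ≤ _ := card_le_card fun r hr => by
        obtain ⟨j, hj, rfl⟩ := mem_image.1 hr
        have := hσ j
        simp only [mem_filter, mem_univ, true_and] at hj
        simp only [mem_inter, mem_filter, mem_univ, true_and, Equiv.symm_apply_apply]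
        omega
  have hall : #{r : Fin m | (r : ℕ) < a + d} ≤ a + d := by
    rw [Fin.card_filter_val_lt]; exact min_le_right _ _
  rw [card_sdiff]
  omega

theorem Nat.le_add_sqrt_of_cast_le_add_sqrt {x j m : ℕ} (h : (x : ℝ) ≤ j + √(m : ℝ)) :
    x ≤ j + Nat.sqrt m := by
  have := Nat.le_floor (h.trans_eq (add_comm _ _))
  rwa [Nat.floor_add_natCast (Real.sqrt_nonneg _), Real.nat_floor_real_sqrt_eq_nat_sqrt,
    add_comm] at this

theorem Nat.mul_sqrt_lt_div_two {h m : ℕ} (hm : (2 * h + 2) ^ 2 ≤ m) : h * Nat.sqrt m < m / 2 := by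
  have hq : 2 * h + 2 ≤ Nat.sqrt m := Nat.le_sqrt'.2 hm
  have hsq := Nat.sqrt_le' m
  have : 2 * (h * Nat.sqrt m) + 2 ≤ m := by nlinarith
  omega

theorem Nat.cast_add_one_le_half_of_lt_div_two {n m : ℕ} (h : n < m / 2) :
    (n : ℝ) + 1 ≤ (m : ℝ) / 2 := by
  exact_mod_cast (Nat.cast_le.2 (Nat.succ_le_of_lt h)).trans (Nat.cast_div_le (α := ℝ))

theorem close_permutations_common_early_element_general (h : ℕ) :
    ∃ M : ℕ, ∀ m : ℕ, M ≤ m → ∀ (B : Type) (γ : Fin m ≃ B) (τ : Fin h → (Fin m ≃ B)),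
      (∀ (s : Fin h) (j : Fin m),
        ((γ.symm ((τ s) j) : ℕ) + 1 : ℝ) ≤ ((j : ℕ) + 1) + Real.sqrt m) →
      ∃ r : Fin m, ((r : ℕ) + 1 : ℝ) ≤ (m : ℝ) / 2 + Real.sqrt m ∧
        ∀ s : Fin h, (((τ s).symm (γ r) : ℕ) + 1 : ℝ) ≤ (m : ℝ) / 2 := by
  refine ⟨(2 * h + 2) ^ 2, fun m hm B γ τ hclose => ?_⟩
  have hq := Nat.mul_sqrt_lt_div_two hm
  have hclose' (s : Fin h) (j : Fin m) : (γ.symm (τ s j) : ℕ) ≤ j + Nat.sqrt m :=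
    Nat.le_add_sqrt_of_cast_le_add_sqrt (by linarith [hclose s j])
  have hbad (s : Fin h) :
      #(({r | (r : ℕ) < m / 2 + Nat.sqrt m} : Finset (Fin m)) \
        ({r | ((τ s).symm (γ r) : ℕ) < m / 2} : Finset (Fin m)))
        ≤ Nat.sqrt m :=
    ((τ s).trans γ.symm).card_filter_lt_add_sdiff_filter_symm_lt_le (hclose' s)
      (Nat.div_le_self m 2)
  have hearly : h * Nat.sqrt m < #{r : Fin m | (r : ℕ) < m / 2 + Nat.sqrt m} := by
    rw [Fin.card_filter_val_lt]
    omega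
  obtain ⟨r, hrT, hrG⟩ := exists_mem_forall_mem_of_card_sdiff_le _ _ hbad
    (by rwa [Fintype.card_fin])
  simp only [mem_filter, mem_univ, true_and] at hrT hrG
  refine ⟨r, ?_, fun s => Nat.cast_add_one_le_half_of_lt_div_two (hrG s)⟩
  calc ((r : ℕ) : ℝ) + 1 ≤ ((m / 2 : ℕ) : ℝ) + (Nat.sqrt m : ℝ) := by
        exact_mod_cast Nat.succ_le_of_lt hrT
    _ ≤ (m : ℝ) / 2 + √(m : ℝ) := add_le_add Nat.cast_div_le Real.nat_sqrt_le_real_sqrt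

/-- For any fixed h ≥ 1 and all sufficiently large m: if B is a set of size m
(identified via bijections from `Fin m`, positions being 1-based), γ, τ₁, …, τ_h
are permutations of B, and each τ_s is close to γ (i.e. the position in γ of the
j-th element of τ_s is at most j + √m), then some element γ(r) with
r ≤ m/2 + √m has position at most m/2 in every τ_s. -/
theorem close_permutations_common_early_element (h : ℕ) (hh : 1 ≤ h) :
    ∃ M : ℕ, ∀ m : ℕ, M ≤ m → ∀ (B : Type) (γ : Fin m ≃ B) (τ : Fin h → (Fin m ≃ B)),
      (∀ (s : Fin h) (j : Fin m),
        ((γ.symm ((τ s) j) : ℕ) + 1 : ℝ) ≤ ((j : ℕ) + 1) + Real.sqrt m) →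
      ∃ r : Fin m, ((r : ℕ) + 1 : ℝ) ≤ (m : ℝ) / 2 + Real.sqrt m ∧
        ∀ s : Fin h, (((τ s).symm (γ r) : ℕ) + 1 : ℝ) ≤ (m : ℝ) / 2 :=
  close_permutations_common_early_element_general h
end

section
/- For any positive integers t and n with n > 2t, there is no decision tree over assignment queries of depth t−1 computing the t-fold iterated composition function Comp^t_n on [n]^n, where Comp^t_n(f(1),…,f(n)) = f^(t)(1). Equivalently, rk(Comp^t_n) ≥ t. -/
/-- Decision trees over assignment queries: each internal node is labeled by a
linear ordering of the set `A` of assignments (represented by an injection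
`A ↪ ℕ` giving each assignment its position in the ordering), with one child per
possible answer; leaves are labeled by outputs. -/
inductive DTree (A O : Type) where
  | leaf (o : O)
  | node (τ : A ↪ ℕ) (child : A → DTree A O)

/-- The τ-first element of the set `C` of assignments consistent with the input. -/
noncomputable def firstConsistent {A : Type} [Nonempty A] (τ : A ↪ ℕ) (C : Finset A) : A :=
  Function.invFun τ ((C.image τ).min.getD 0)

/-- Depth of a decision tree: maximal number of queries on a root-to-leaf path. -/
def DTree.depth {A O : Type} [Fintype A] : DTree A O → ℕ
  | .leaf _ => 0
  | .node _ c => (Finset.univ.sup fun a => (c a).depth) + 1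

/-- Evaluation of a decision tree on an input `w`, where `consSet w` is the set of
assignments consistent with `w`: at each node descend along the child labeled by
the first consistent assignment in the node's ordering. -/
noncomputable def DTree.eval {I A O : Type} [Nonempty A] (consSet : I → Finset A) :
    DTree A O → I → O
  | .leaf o, _ => o
  | .node τ c, w => (c (firstConsistent τ (consSet w))).eval consSet w

/-- Assignments are pairs (i,j) ∈ [n]×[n]; (i,j) is consistent with f iff f(i)=j. -/
def consSet (n : ℕ) (w : Fin n → Fin n) : Finset (Fin n × Fin n) :=
  Finset.univ.filter fun a => w a.1 = a.2

/-- The t-fold iterated composition function: f ↦ f^(t)(1). -/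
def iterComp (t n : ℕ) [NeZero n] (w : Fin n → Fin n) : Fin n := w^[t] 0

/-!
Adversary argument. The adversary answers every query so that, after `k` queries, the answers
fix the input as `ρ` on a set `D` of at most `k` points, the values outside `D` are only required
to avoid the set `B = {0} ∪ D ∪ ρ(D)` (of size at most `2k + 1`), and the orbit of `0` leaves `D`
after at most `#D` steps: each new answer is a point outside `B`, so the known part of the orbit
never closes up. At a leaf reached after at most `t - 1` queries, `n > 2t` leaves a point `z`
outside `B` different from the leaf's label; sending everything outside `D` to `z` is consistent
with all answers and makes `f^(t)(0) = z`.
-/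

open Finset Function

section Adversary

variable {α : Type*} (x : α) (D : Finset α) (ρ : α → α)

def LeavesWithin : Prop :=
  ∃ e ≤ #D, (∀ j < e, ρ^[j] x ∈ D) ∧ ρ^[e] x ∉ D

lemma leavesWithin_empty : LeavesWithin x ∅ ρ := ⟨0, le_rfl, nofun, notMem_empty _⟩

variable {x D ρ} in
lemma iterate_eq_of_eqOn {w : α → α} (hw : Set.EqOn w ρ D) {e : ℕ}
    (h : ∀ j < e, ρ^[j] x ∈ D) : w^[e] x = ρ^[e] x := by
  induction e with
  | zero => rfl
  | succ m ih =>
    rw [iterate_succ_apply', iterate_succ_apply', ih fun j hj => h j (by omega),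
      hw (h m m.lt_succ_self)]

variable [DecidableEq α]

def blocked : Finset α := insert x (D ∪ D.image ρ)

/-- The assignment `(i, j)` is consistent with some input that agrees with `ρ` on `D` and takes
values outside `blocked x D ρ` off `D`. -/
def Admissible (i j : α) : Prop :=
  (i ∈ D → j = ρ i) ∧ (i ∉ D → j ∉ blocked x D ρ)

def Extends (w : α → α) : Prop := ∀ i, Admissible x D ρ i (w i)

variable {x D ρ}

lemma card_blocked_le : #(blocked x D ρ) ≤ 2 * #D + 1 := by
  unfold blocked
  calc #(insert x (D ∪ D.image ρ)) ≤ #(D ∪ D.image ρ) + 1 := card_insert_le _ _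
    _ ≤ #D + #(D.image ρ) + 1 := by grw [card_union_le]
    _ ≤ 2 * #D + 1 := by grw [card_image_le]; omega

lemma subset_blocked : D ⊆ blocked x D ρ :=
  subset_union_left.trans (subset_insert _ _)

lemma iterate_mem_blocked {e : ℕ} (h : ∀ j < e, ρ^[j] x ∈ D) : ρ^[e] x ∈ blocked x D ρ := by
  cases e with
  | zero => exact mem_insert_self _ _
  | succ m =>
    rw [iterate_succ_apply']
    exact mem_insert_of_mem (mem_union_right _ (mem_image_of_mem ρ (h m m.lt_succ_self)))

variable {i j : α}

lemma Admissible.eqOn_update (h : Admissible x D ρ i j) : Set.EqOn (update ρ i j) ρ D := by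
  intro k hk
  rcases eq_or_ne k i with rfl | hki
  · rw [update_self, h.1 hk]
  · exact update_of_ne hki _ _

lemma Admissible.blocked_subset (h : Admissible x D ρ i j) :
    blocked x D ρ ⊆ blocked x (insert i D) (update ρ i j) := by
  unfold blocked
  rw [← image_congr h.eqOn_update]
  gcongr <;> exact subset_insert _ _

lemma Admissible.of_update (h : Admissible x D ρ i j) {k l : α}
    (hkl : Admissible x (insert i D) (update ρ i j) k l) : Admissible x D ρ k l := by
  refine ⟨fun hk => ?_, fun hk => ?_⟩
  · rw [hkl.1 (mem_insert_of_mem hk), h.eqOn_update hk]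
  · rcases eq_or_ne k i with rfl | hki
    · rw [hkl.1 (mem_insert_self _ _), update_self]
      exact h.2 hk
    · exact fun hl => hkl.2 (by simp [hki, hk]) (h.blocked_subset hl)

lemma Extends.of_update {w : α → α} (h : Admissible x D ρ i j)
    (hw : Extends x (insert i D) (update ρ i j) w) : Extends x D ρ w ∧ w i = j :=
  ⟨fun k => h.of_update (hw k), by rw [(hw i).1 (mem_insert_self _ _), update_self]⟩

/-- If the new point is where the orbit used to leave `D`, its value is fresh, so the orbit
leaves the enlarged set one step later. -/
lemma LeavesWithin.update (hρ : LeavesWithin x D ρ) (h : Admissible x D ρ i j) :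
    LeavesWithin x (insert i D) (Function.update ρ i j) := by
  obtain ⟨e, he, hin, hout⟩ := hρ
  have hagree : ∀ m ≤ e, (Function.update ρ i j)^[m] x = ρ^[m] x := fun m hm =>
    iterate_eq_of_eqOn h.eqOn_update fun k hk => hin k (by omega)
  by_cases hexit : ρ^[e] x = i
  · subst hexit
    have hj : j ∉ blocked x D ρ := h.2 hout
    have hji : j ≠ ρ^[e] x := fun hji => hj (hji ▸ iterate_mem_blocked hin)
    refine ⟨e + 1, by rw [card_insert_of_notMem hout]; omega, fun m hm => ?_, ?_⟩
    · rcases Nat.lt_succ_iff_lt_or_eq.mp hm with hm | rfl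
      · exact mem_insert_of_mem (hagree m hm.le ▸ hin m hm)
      · rw [hagree m le_rfl]
        exact mem_insert_self _ _
    · rw [iterate_succ_apply', hagree e le_rfl, update_self, mem_insert, not_or]
      exact ⟨hji, fun hjD => hj (subset_blocked hjD)⟩
  · refine ⟨e, he.trans (card_le_card (subset_insert _ _)), fun m hm => ?_, ?_⟩
    · exact mem_insert_of_mem (hagree m hm.le ▸ hin m hm)
    · rw [hagree e le_rfl, mem_insert, not_or]
      exact ⟨hexit, hout⟩

lemma LeavesWithin.exists_extends_iterate_eq (hρ : LeavesWithin x D ρ) {t : ℕ} (ht : #D < t)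
    {z : α} (hz : z ∉ blocked x D ρ) : ∃ w, Extends x D ρ w ∧ w^[t] x = z := by
  obtain ⟨e, he, hin, hout⟩ := hρ
  set w : α → α := fun k => if k ∈ D then ρ k else z
  have hw : Set.EqOn w ρ D := fun k hk => if_pos hk
  have hexit : w^[e + 1] x = z := by
    rw [iterate_succ_apply', iterate_eq_of_eqOn hw hin]
    exact if_neg hout
  have hfix : w z = z := if_neg fun hzD => hz (subset_blocked hzD)
  refine ⟨w, fun k => ⟨fun hk => if_pos hk, fun hk => by simpa [w, hk] using hz⟩, ?_⟩
  rw [show t = (t - (e + 1)) + (e + 1) by omega, iterate_add_apply, hexit, iterate_fixed hfix]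

end Adversary

lemma firstConsistent_eq_of_forall_le {A : Type} [Nonempty A] {τ : A ↪ ℕ} {S C : Finset A}
    {a : A} (ha : a ∈ S) (hSC : S ⊆ C) (hmin : ∀ b ∈ C, τ a ≤ τ b) :
    firstConsistent τ S = a := by
  have hmin' : (S.image τ).min = (τ a : WithTop ℕ) :=
    le_antisymm (min_le (mem_image_of_mem τ ha)) <| Finset.le_min fun _ hb => by
      obtain ⟨b, hbS, rfl⟩ := mem_image.mp hb
      exact WithTop.coe_le_coe.mpr (hmin b (hSC hbS))
  rw [firstConsistent, hmin']
  exact leftInverse_invFun τ.injective a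

/-- The adversary: the query at a node is answered by the τ-first admissible assignment. -/
lemma exists_extends_eval_ne {t n : ℕ} [NeZero n] (hn : 2 * t < n)
    (T : DTree (Fin n × Fin n) (Fin n)) (D : Finset (Fin n)) (ρ : Fin n → Fin n)
    (hdepth : T.depth + #D < t) (hρ : LeavesWithin 0 D ρ) :
    ∃ w, Extends 0 D ρ w ∧ T.eval (consSet n) w ≠ w^[t] 0 := by
  induction T generalizing D ρ with
  | leaf o =>
    rw [DTree.depth, zero_add] at hdepth
    have hcard : #(insert o (blocked 0 D ρ)) < #(univ : Finset (Fin n)) := by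
      have hinsert := card_insert_le o (blocked 0 D ρ)
      have hB := card_blocked_le (x := 0) (D := D) (ρ := ρ)
      rw [card_univ, Fintype.card_fin]
      omega
    obtain ⟨z, -, hz⟩ := exists_mem_notMem_of_card_lt_card hcard
    rw [mem_insert, not_or] at hz
    obtain ⟨w, hw, hwz⟩ := hρ.exists_extends_iterate_eq hdepth hz.2
    exact ⟨w, hw, by rw [hwz]; exact Ne.symm hz.1⟩
  | node τ c ih =>
    classical
    have hB := card_blocked_le (x := 0) (D := D) (ρ := ρ)
    obtain ⟨j₀, -, hj₀⟩ := exists_mem_notMem_of_card_lt_card (s := blocked 0 D ρ)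
      (t := univ) (by rw [card_univ, Fintype.card_fin]; omega)
    set C := univ.filter fun a : Fin n × Fin n => Admissible 0 D ρ a.1 a.2
    have hC : C.Nonempty :=
      ⟨(j₀, j₀), mem_filter.mpr ⟨mem_univ _, fun h => absurd (subset_blocked h) hj₀, fun _ => hj₀⟩⟩
    obtain ⟨a, haC, hmin⟩ := exists_min_image C τ hC
    have ha : Admissible 0 D ρ a.1 a.2 := (mem_filter.mp haC).2
    have hchild : (c a).depth ≤ univ.sup fun b => (c b).depth :=
      le_sup (f := fun b => (c b).depth) (mem_univ a)
    have hinsert := card_insert_le a.1 D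
    rw [DTree.depth] at hdepth
    obtain ⟨w, hw', hne⟩ := ih a (insert a.1 D) (update ρ a.1 a.2) (by omega) (hρ.update ha)
    obtain ⟨hw, hwa⟩ := hw'.of_update ha
    have hfirst : firstConsistent τ (consSet n w) = a :=
      firstConsistent_eq_of_forall_le (by simp [consSet, hwa])
        (fun b hb => by simpa [C, (mem_filter.mp hb).2] using hw b.1) hmin
    exact ⟨w, hw, by rwa [DTree.eval, hfirst]⟩

/-- For n > 2t there is no decision tree over assignment queries of depth t−1
computing `iterComp t n`; i.e. rk(Comp^t_n) ≥ t. -/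
theorem iterComp_rank_lower_bound (t n : ℕ) (ht : 0 < t) (hn : 2 * t < n) [NeZero n] :
    ¬ ∃ T : DTree (Fin n × Fin n) (Fin n),
        T.depth ≤ t - 1 ∧ ∀ w : Fin n → Fin n, T.eval (consSet n) w = iterComp t n w := by
  rintro ⟨T, hdepth, hT⟩
  obtain ⟨w, -, hw⟩ := exists_extends_eval_ne hn T ∅ id (by rw [card_empty]; omega)
    (leavesWithin_empty 0 id)
  exact hw (hT w)
end

section
/- Let f : [n] → [n] be defined by f(i_s) = j_s for s = 1,…,k (with i_1,…,i_k distinct and j_1,…,j_k distinct), and f(x) = y for all x ∉ {i_1,…,i_k}, where y ∉ {1, i_1,…,i_k, j_1,…,j_k}. If k ≤ t − 1, then f^(t)(1) = y. -/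
/-!
The orbit `0, f 0, f² 0, …` cannot stay inside `{i₁,…,i_k}` for `k + 1` steps: `f` is injective
there (it maps `i_s ↦ j_s`) and `0` has no preimage in it, so such an orbit segment would consist of
`k + 1` distinct points of a `k`-element set. Once the orbit leaves `{i₁,…,i_k}` it is sent to `y`,
which `f` fixes.
-/

namespace Function

variable {α : Type*} {f : α → α} {A : Set α} {x : α}

/-- Tracing two equal orbit points back one step at a time ends at `x`, which has no preimage. -/
theorem iterate_ne_iterate_of_injOn (hf : Set.InjOn f A) (hx : ∀ a ∈ A, f a ≠ x)
    {N : ℕ} (hA : ∀ m < N, f^[m] x ∈ A) {a b : ℕ} (hab : a < b) (hb : b ≤ N) :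
    f^[a] x ≠ f^[b] x := by
  induction a generalizing b with
  | zero =>
    obtain ⟨b, rfl⟩ := Nat.exists_eq_add_one_of_ne_zero hab.ne'
    rw [iterate_succ_apply']
    exact (hx _ (hA b (by omega))).symm
  | succ a ih =>
    obtain ⟨b, rfl⟩ := Nat.exists_eq_add_one_of_ne_zero (by omega : b ≠ 0)
    rw [iterate_succ_apply', iterate_succ_apply']
    exact fun h => ih (by omega) (by omega) (hf (hA a (by omega)) (hA b (by omega)) h)

theorem exists_iterate_notMem_of_injOn [DecidableEq α] {A : Finset α}
    (hf : Set.InjOn f A) (hx : ∀ a ∈ A, f a ≠ x) {N : ℕ} (hN : A.card ≤ N) :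
    ∃ m ≤ N, f^[m] x ∉ A := by
  by_contra! hA
  have hinj : Set.InjOn (fun m => f^[m] x) (Finset.range (N + 1)) := by
    intro a ha b hb hab
    simp only [Finset.coe_range, Set.mem_Iio] at ha hb
    by_contra hne
    rcases Nat.lt_or_gt_of_ne hne with h | h
    · exact iterate_ne_iterate_of_injOn hf hx (fun m hm => hA m hm.le) h (by omega) hab
    · exact iterate_ne_iterate_of_injOn hf hx (fun m hm => hA m hm.le) h (by omega) hab.symm
  have := Finset.card_le_card_of_injOn _ (fun m hm => hA m (by simpa [Nat.lt_succ_iff] using hm)) hinj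
  simp only [Finset.card_range] at this
  omega

theorem iterate_eq_of_le_of_isFixedPt {y : α} (hy : IsFixedPt f y) {m t : ℕ}
    (hm : f^[m] x = y) (hmt : m ≤ t) : f^[t] x = y := by
  obtain ⟨r, rfl⟩ := Nat.exists_eq_add_of_le hmt
  rw [add_comm, iterate_add_apply, hm, hy.iterate r]

end Function

theorem iterate_reaches_fixed_point_general (n t k : ℕ) [NeZero n]
    (i j : Fin k → Fin n) (y : Fin n) (f : Fin n → Fin n)
    (hj : Function.Injective j)
    (hfij : ∀ s, f (i s) = j s)
    (hfy : ∀ x : Fin n, (∀ s, x ≠ i s) → f x = y)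
    (hyi : ∀ s, y ≠ i s)
    (h1j : ∀ s, j s ≠ 0)
    (hk : k + 1 ≤ t) :
    f^[t] 0 = y := by
  set A := Finset.univ.image i
  have hinj : Set.InjOn f A := by
    simp only [A, Finset.coe_image, Finset.coe_univ, Set.image_univ]
    rintro _ ⟨s, rfl⟩ _ ⟨s', rfl⟩ h
    rw [hfij, hfij] at h
    rw [hj h]
  have hpre : ∀ a ∈ A, f a ≠ 0 := by
    simp only [A, Finset.mem_image, Finset.mem_univ, true_and]
    rintro _ ⟨s, rfl⟩
    rw [hfij]
    exact h1j s
  have hcard : A.card ≤ k := Finset.card_image_le.trans_eq (Finset.card_fin k)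
  obtain ⟨m, hm, hmA⟩ := Function.exists_iterate_notMem_of_injOn hinj hpre hcard
  have hexit : f^[m + 1] 0 = y := by
    rw [Function.iterate_succ_apply']
    exact hfy _ fun s h => hmA (h ▸ Finset.mem_image_of_mem i (Finset.mem_univ s))
  exact Function.iterate_eq_of_le_of_isFixedPt (hfy y hyi) hexit (by omega)

/-- Let f : [n] → [n] satisfy f(i_s) = j_s for s = 1,…,k (i's pairwise distinct,
j's pairwise distinct) and f(x) = y for all x outside {i_1,…,i_k}, where
y ∉ {1, i_1,…,i_k, j_1,…,j_k} and 1 ∉ {j_1,…,j_k}.  If k ≤ t−1 then f^(t)(1) = y.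
Here [n] is modeled by `Fin n` with the element "1" being `0 : Fin n`. -/
theorem iterate_reaches_fixed_point (n t k : ℕ) [NeZero n]
    (i j : Fin k → Fin n) (y : Fin n) (f : Fin n → Fin n)
    (hi : Function.Injective i) (hj : Function.Injective j)
    (hfij : ∀ s, f (i s) = j s)
    (hfy : ∀ x : Fin n, (∀ s, x ≠ i s) → f x = y)
    (hy1 : y ≠ 0) (hyi : ∀ s, y ≠ i s) (hyj : ∀ s, y ≠ j s)
    (h1j : ∀ s, j s ≠ 0)
    (hk : k + 1 ≤ t) :
    f^[t] 0 = y :=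
  iterate_reaches_fixed_point_general n t k i j y f hj hfij hfy hyi h1j hk
end

section
/- Let m positions i_1,…,i_m ∈ [n] with m ≤ k−1 be fixed to Boolean values σ_1,…,σ_m, and suppose n ≥ k² + k. Then there exist two inputs w, w' ∈ {0,1}^n, both satisfying w_{i_j} = w'_{i_j} = σ_j for all j, such that One^k_n(w) ≠ One^k_n(w'). -/
/-
Fill the free positions with ones in `w` and with zeros in `w'`. Since `m < k`, `w'` has fewer
than `k` ones, so `One^k_n(w') = n + 1`. Since `n - m ≥ k`, `w` has at least `k` ones; the
number of ones in a prefix grows by steps of at most one, so some prefix of `w` holds exactly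
`k` ones and `One^k_n(w) ≤ n`.
-/

/-- One^k_n(w) : the (1-based) position of the k-th one in w ∈ {0,1}^n, or n+1
if w has fewer than k ones. -/
def oneK (k n : ℕ) (w : Fin n → Bool) : ℕ :=
  (((Finset.range n).filter fun p =>
      (Finset.univ.filter fun j : Fin n => (j : ℕ) ≤ p ∧ w j = true).card = k).min.getD n) + 1

open Finset Function

theorem Nat.exists_le_eq_of_succ_le_add_one {f : ℕ → ℕ} {k N : ℕ} (h0 : f 0 ≤ k)
    (hN : k ≤ f N) (hstep : ∀ p, f (p + 1) ≤ f p + 1) : ∃ p ≤ N, f p = k := by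
  induction N with
  | zero => exact ⟨0, le_rfl, le_antisymm h0 hN⟩
  | succ N ih =>
    by_cases hk : k ≤ f N
    · obtain ⟨p, hpN, hp⟩ := ih hk
      exact ⟨p, hpN.trans N.le_succ, hp⟩
    · exact ⟨N + 1, le_rfl, by have := hstep N; omega⟩

def ones {ι : Type*} [Fintype ι] (w : ι → Bool) : Finset ι := univ.filter fun j => w j = true

section Ones

variable {n : ℕ} (w : Fin n → Bool)

def onesUpTo (p : ℕ) : ℕ := (univ.filter fun j : Fin n => (j : ℕ) ≤ p ∧ w j = true).card

theorem onesUpTo_le_card_ones (p : ℕ) : onesUpTo w p ≤ (ones w).card :=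
  card_le_card fun j hj => by simp_all [ones]

theorem onesUpTo_eq_card_ones {p : ℕ} (hp : n ≤ p + 1) : onesUpTo w p = (ones w).card := by
  unfold onesUpTo ones
  congr 1
  ext j
  simp only [mem_filter, mem_univ, true_and, and_iff_right_iff_imp]
  intro
  have := j.isLt
  omega

theorem onesUpTo_zero_le_one : onesUpTo w 0 ≤ 1 :=
  card_le_one.2 fun a ha b hb => by
    simp only [mem_filter, mem_univ, true_and, Nat.le_zero] at ha hb
    exact Fin.ext (ha.1.trans hb.1.symm)

theorem onesUpTo_succ_le (p : ℕ) : onesUpTo w (p + 1) ≤ onesUpTo w p + 1 := by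
  have hsplit : (univ.filter fun j : Fin n => (j : ℕ) ≤ p + 1 ∧ w j = true) ⊆
      (univ.filter fun j : Fin n => (j : ℕ) ≤ p ∧ w j = true) ∪
      univ.filter fun j : Fin n => (j : ℕ) = p + 1 := by
    intro j
    simp only [mem_filter, mem_union, mem_univ, true_and]
    rintro ⟨hjp, hwj⟩
    by_cases hj : (j : ℕ) = p + 1
    · exact Or.inr hj
    · exact Or.inl ⟨by omega, hwj⟩
  have hlast : (univ.filter fun j : Fin n => (j : ℕ) = p + 1).card ≤ 1 :=
    card_le_one.2 fun a ha b hb => by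
      simp only [mem_filter, mem_univ, true_and] at ha hb
      exact Fin.ext (ha.trans hb.symm)
  calc onesUpTo w (p + 1) ≤ _ := card_le_card hsplit
    _ ≤ _ := card_union_le _ _
    _ ≤ onesUpTo w p + 1 := Nat.add_le_add_left hlast _

theorem oneK_eq_of_card_ones_lt {k : ℕ} (hk : (ones w).card < k) : oneK k n w = n + 1 := by
  have hempty : ((range n).filter fun p => onesUpTo w p = k) = ∅ :=
    filter_false_of_mem fun p _ => (lt_of_le_of_lt (onesUpTo_le_card_ones w p) hk).ne
  change ((range n).filter fun p => onesUpTo w p = k).min.getD n + 1 = n + 1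
  rw [hempty]
  rfl

theorem oneK_le_of_le_card_ones {k : ℕ} (hk : 1 ≤ k) (hkw : k ≤ (ones w).card) :
    oneK k n w ≤ n := by
  have hn : 1 ≤ n := by
    have := card_le_univ (ones w)
    simp only [Fintype.card_fin] at this
    omega
  obtain ⟨p, hpn, hp⟩ := Nat.exists_le_eq_of_succ_le_add_one (N := n - 1)
    ((onesUpTo_zero_le_one w).trans hk) (hkw.trans (onesUpTo_eq_card_ones w (by omega)).ge)
    (onesUpTo_succ_le w)
  have hmem : p ∈ (range n).filter fun p => onesUpTo w p = k :=
    mem_filter.2 ⟨mem_range.2 (by omega), hp⟩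
  change ((range n).filter fun p => onesUpTo w p = k).min.getD n + 1 ≤ n
  obtain ⟨q, hq⟩ := Finset.min_of_mem hmem
  have hqp : q ≤ p := WithTop.coe_le_coe.1 (hq ▸ Finset.min_le hmem)
  rw [hq]
  change q + 1 ≤ n
  omega

end Ones

section Extend

variable {α β : Type*} [Fintype α] [Fintype β] (i : α → β) (σ : α → Bool)

theorem card_ones_extend_false_le : (ones (extend i σ fun _ => false)).card ≤ Fintype.card α := by
  classical
  refine (card_le_card (t := univ.image i) fun b hb => ?_).trans card_image_le
  by_contra hbi
  simp_all [ones, extend_apply' σ _ b (by simpa using hbi)]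

theorem card_sub_le_card_ones_extend_true :
    Fintype.card β - Fintype.card α ≤ (ones (extend i σ fun _ => true)).card := by
  classical
  have hcompl : (univ.image i)ᶜ ⊆ ones (extend i σ fun _ => true) :=
    fun b hb => by
      simp only [mem_compl, mem_image, mem_univ, true_and] at hb
      simp [ones, extend_apply' σ _ b hb]
  calc Fintype.card β - Fintype.card α ≤ Fintype.card β - (univ.image i).card :=
        Nat.sub_le_sub_left card_image_le _
    _ = (univ.image i)ᶜ.card := (card_compl _).symm
    _ ≤ _ := card_le_card hcompl

end Extend

/-- If m ≤ k−1 distinct positions are fixed to Boolean values and n ≥ k² + k,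
then there are two inputs agreeing with the fixation on which One^k_n differs. -/
theorem oneK_not_determined_by_fixation (n k m : ℕ) (hm : m + 1 ≤ k) (hn : k ^ 2 + k ≤ n)
    (i : Fin m → Fin n) (hi : Function.Injective i) (σ : Fin m → Bool) :
    ∃ w w' : Fin n → Bool,
      (∀ j, w (i j) = σ j) ∧ (∀ j, w' (i j) = σ j) ∧ oneK k n w ≠ oneK k n w' := by
  refine ⟨extend i σ fun _ => true, extend i σ fun _ => false,
    hi.extend_apply σ _, hi.extend_apply σ _, ?_⟩
  have hkm : k + m ≤ n := by nlinarith
  have hmany : k ≤ (ones (extend i σ fun _ => true)).card := by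
    have := card_sub_le_card_ones_extend_true i σ
    simp only [Fintype.card_fin] at this
    omega
  have hfew : (ones (extend i σ fun _ => false)).card < k := by
    have := card_ones_extend_false_le i σ
    simp only [Fintype.card_fin] at this
    omega
  rw [oneK_eq_of_card_ones_lt _ hfew]
  exact (oneK_le_of_le_card_ones _ (by omega) hmany).trans_lt n.lt_succ_self |>.ne
end

section
/- Let S = S⁺ ∪ S⁻ where S⁺ = { e_i : i ∈ [n] } is the set of standard basis vectors of {0,1}^n (each with exactly one 1) and S⁻ = { 0ⁿ }. Then for any linear order on the 2n assignments separating S⁺ from S⁻ via the first-consistent-assignment query (i.e., the query value distinguishes every element of S⁺ from 0ⁿ), at most one 1-assignment (i,1) is smaller in the order than some 0-assignment; equivalently, for all but at most one index i, the assignment (i,1) is larger than every assignment (j,0). -/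
/-- The query value of x under the linear order τ on assignments (i,b):
the τ-maximal assignment consistent with x (where (i,b) is consistent with x iff
x_i = b). -/
noncomputable def maxCons (n : ℕ) [NeZero n] (τ : (Fin n × Bool) ↪ ℕ) (x : Fin n → Bool) :
    Fin n × Bool :=
  Function.invFun τ (((Finset.univ.filter fun a : Fin n × Bool => x a.1 = a.2).image τ).max.getD 0)

/-!
Let `z` be the query value of `0ⁿ`; it is a 0-assignment `(i₀, 0)`. For `i ≠ i₀`, `z` is also
consistent with `e_i`, so the query value `w` of `e_i` lies above `z`, and `w ≠ z` by separation.
Then `w` is not consistent with `0ⁿ` (it would lie below `z`), so `w = (i, 1)`, and every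
0-assignment lies below `z`, hence strictly below `(i, 1)`.
-/

section
variable {n : ℕ} [NeZero n] (τ : (Fin n × Bool) ↪ ℕ)

lemma maxCons_eq_of_forall_le {x : Fin n → Bool} {a : Fin n × Bool} (ha : x a.1 = a.2)
    (hle : ∀ b : Fin n × Bool, x b.1 = b.2 → τ b ≤ τ a) : maxCons n τ x = a := by
  have hmax : ((Finset.univ.filter fun b : Fin n × Bool => x b.1 = b.2).image τ).max = τ a :=
    le_antisymm (Finset.max_le fun _ hm => by
        obtain ⟨b, hb, rfl⟩ := Finset.mem_image.mp hm
        exact WithBot.coe_le_coe.mpr (hle b (Finset.mem_filter.mp hb).2))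
      (Finset.le_max (Finset.mem_image_of_mem τ (by simpa using ha)))
  rw [maxCons, hmax]
  exact Function.leftInverse_invFun τ.injective a

lemma exists_maxCons_eq (x : Fin n → Bool) :
    ∃ a : Fin n × Bool, x a.1 = a.2 ∧ (∀ b : Fin n × Bool, x b.1 = b.2 → τ b ≤ τ a) ∧
      maxCons n τ x = a := by
  have hne : (Finset.univ.filter fun b : Fin n × Bool => x b.1 = b.2).Nonempty :=
    ⟨(0, x 0), by simp⟩
  obtain ⟨a, ha, hle⟩ := Finset.exists_max_image _ τ hne
  have ha' : x a.1 = a.2 := (Finset.mem_filter.mp ha).2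
  have hle' : ∀ b : Fin n × Bool, x b.1 = b.2 → τ b ≤ τ a := fun b hb => hle b (by simpa using hb)
  exact ⟨a, ha', hle', maxCons_eq_of_forall_le τ ha' hle'⟩

lemma maxCons_consistent (x : Fin n → Bool) : x (maxCons n τ x).1 = (maxCons n τ x).2 := by
  obtain ⟨a, ha, -, hx⟩ := exists_maxCons_eq τ x
  rwa [hx]

lemma le_maxCons {x : Fin n → Bool} {b : Fin n × Bool} (hb : x b.1 = b.2) :
    τ b ≤ τ (maxCons n τ x) := by
  obtain ⟨a, -, hle, hx⟩ := exists_maxCons_eq τ x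
  exact hx ▸ hle b hb

lemma maxCons_eq_of_consistent_of_consistent {x y : Fin n → Bool}
    (hxy : y (maxCons n τ x).1 = (maxCons n τ x).2)
    (hyx : x (maxCons n τ y).1 = (maxCons n τ y).2) : maxCons n τ x = maxCons n τ y :=
  τ.injective (le_antisymm (le_maxCons τ hxy) (le_maxCons τ hyx))

end

theorem basis_vs_zero_separation_general (n : ℕ) [NeZero n]
    (τ : (Fin n × Bool) ↪ ℕ)
    (hsep : ∀ i : Fin n,
      maxCons n τ (fun j => decide (j = i)) ≠ maxCons n τ (fun _ => false)) :
    ∃ i₀ : Fin n, ∀ i : Fin n, i ≠ i₀ → ∀ j : Fin n, τ (j, false) < τ (i, true) := by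
  set z := maxCons n τ (fun _ => false)
  have hz : z.2 = false := (maxCons_consistent τ _).symm
  refine ⟨z.1, fun i hi j => ?_⟩
  set w := maxCons n τ (fun j => decide (j = i))
  have hz_cons : decide (z.1 = i) = z.2 := by simp [hz, Ne.symm hi]
  have hw_snd : w.2 = true := by
    by_contra h
    exact hsep i (maxCons_eq_of_consistent_of_consistent τ (by simpa using h) hz_cons)
  have hw : w = (i, true) := by
    have := maxCons_consistent τ (fun j => decide (j = i))
    exact Prod.ext (by simpa [w, hw_snd] using this) hw_snd
  calc τ (j, false) ≤ τ z := le_maxCons τ rfl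
    _ < τ w := lt_of_le_of_ne (le_maxCons τ hz_cons) (τ.injective.ne (hsep i).symm)
    _ = τ (i, true) := by rw [hw]

/-- Let S⁺ consist of the n standard basis vectors e_i of {0,1}^n and S⁻ = {0ⁿ}.
If a linear order τ on the 2n assignments separates S⁺ from S⁻ (the query value
of each e_i differs from that of 0ⁿ), then all 1-assignments except possibly one
are larger in τ than every 0-assignment. -/
theorem basis_vs_zero_separation (n : ℕ) (hn : 2 ≤ n) [NeZero n]
    (τ : (Fin n × Bool) ↪ ℕ)
    (hsep : ∀ i : Fin n,
      maxCons n τ (fun j => decide (j = i)) ≠ maxCons n τ (fun _ => false)) :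
    ∃ i₀ : Fin n, ∀ i : Fin n, i ≠ i₀ → ∀ j : Fin n, τ (j, false) < τ (i, true) :=
  basis_vs_zero_separation_general n τ hsep
end
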